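/- Let N be a prime, s ≥ 1, let f : ℤ/Nℤ → ℂ have ‖f‖_{L²} ≤ 1, let ε₁, ε₂, ε₃, ε₄ > 0 satisfy ε₂^{-1}ε₃ + ε₄^{-1}ε₁ ≤ 1/2, and let η > 0. Then there exists a decomposition f = f₁ + f₂ + f₃ where: f₁ = Σ_j a_j D_{U^s}((f_{ω,j})) is a finite linear combination of dual U^s functions of one-bounded functions with Σ_j |a_j| ≤ η·(ε₁η)^{-2^s}; ‖f₂‖_{L¹} ≤ ε₂ + η; and ‖f₃‖_{L∞} ≤ ε₃^{-1} with ‖f₃‖_{U^s} ≤ ε₄. -/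

import Mathlib

/-!
Hahn–Banach in the finite-dimensional space `ZMod N → ℂ`. Let `K₁` be the closed convex hull of
the dual functions `z · D_{U^s}(F)` with `|z| ≤ R`, `K₂` the `L¹`-ball of radius `β`, and `K₃` the
functions bounded by `M` whose correlation with every dual function is at most `δ`. All three are
compact and convex. If `f ∉ K₁ + K₂ + K₃`, a separating functional `ψ` satisfies
`‖ψ‖_∞ ≤ (Nβ)⁻¹` (test against `K₂`) and `|⟨D, ψ⟩| ≤ R⁻¹` (test against `K₁`), so that
`N · conj ψ ∈ K₃` once `β⁻¹ ≤ M` and `R⁻¹ ≤ δ`; testing against it gives `N ‖ψ‖₂² ≤ 1`, and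
Cauchy–Schwarz with `‖f‖₂ ≤ 1` contradicts the separation. Finally a function in `K₃` has small
`U^s` norm because `‖g‖_{U^s}^{2^s}` is the correlation of `g` with the dual function of its
conjugates, and the closure in `K₁` costs an arbitrarily small `L¹` error.
-/

open Finset

noncomputable section

/-- The number of nonzero coordinates of `ω ∈ {0,1}^s`. -/
def wt {s : ℕ} (ω : Fin s → Bool) : ℕ := (Finset.univ.filter fun i => ω i = true).card

/-- `C^k z`: complex conjugation applied `k` times. -/
def cconj (k : ℕ) (z : ℂ) : ℂ := if Even k then z else (starRingEnd ℂ) z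

/-- The Gowers `U^s` norm of `f : ZMod N → ℂ`. -/
def gowers {N : ℕ} [NeZero N] (s : ℕ) (f : ZMod N → ℂ) : ℝ :=
  (Norm.norm ((∑ x : ZMod N, ∑ h : Fin s → ZMod N,
      ∏ ω : Fin s → Bool,
        cconj (wt ω) (f (x + ∑ i, if ω i then h i else 0))) / (N : ℂ) ^ (s + 1))) ^
    (((2 : ℝ) ^ s)⁻¹)

/-- The dual `U^s` function `D_{U^s}((f_ω))(x) = 𝔼_{h₁,…,h_s} ∏_{ω∈{0,1}^s_*} f_ω(x + ω·h)`. -/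
def dualUs {N : ℕ} [NeZero N] (s : ℕ) (F : (Fin s → Bool) → ZMod N → ℂ)
    (x : ZMod N) : ℂ :=
  (∑ h : Fin s → ZMod N,
    ∏ ω ∈ Finset.univ.filter (fun ω : Fin s → Bool => ω ≠ fun _ => false),
      F ω (x + ∑ i, if ω i then h i else 0)) / (N : ℂ) ^ s

/-- `‖f‖_{L¹} = 𝔼_x |f(x)|`. -/
def L1norm {N : ℕ} [NeZero N] (f : ZMod N → ℂ) : ℝ :=
  (∑ x : ZMod N, Norm.norm (f x)) / (N : ℝ)

/-- `‖f‖_{L²} = (𝔼_x |f(x)|²)^{1/2}`. -/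
def L2norm {N : ℕ} [NeZero N] (f : ZMod N → ℂ) : ℝ :=
  Real.sqrt ((∑ x : ZMod N, Norm.norm (f x) ^ 2) / (N : ℝ))

/-- `‖f‖_{L∞} = max_x |f(x)|`. -/
def Linfnorm {N : ℕ} [NeZero N] (f : ZMod N → ℂ) : ℝ :=
  ⨆ x : ZMod N, Norm.norm (f x)

open scoped Pointwise

theorem Complex.norm_le_of_forall_re_mul_le {w : ℂ} {r : ℝ}
    (h : ∀ z : ℂ, ‖z‖ ≤ 1 → (z * w).re ≤ r) : ‖w‖ ≤ r := by
  rcases eq_or_ne w 0 with rfl | hw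
  · simpa using h 0 (by simp)
  · have hw' : 0 < ‖w‖ := norm_pos_iff.mpr hw
    have hz : ‖(starRingEnd ℂ) w / (‖w‖ : ℂ)‖ ≤ 1 := by
      rw [norm_div, Complex.norm_conj, Complex.norm_real, Real.norm_of_nonneg hw'.le,
        div_self hw'.ne']
    have hzw : (starRingEnd ℂ) w / (‖w‖ : ℂ) * w = (‖w‖ : ℂ) := by
      rw [div_mul_eq_mul_div, mul_comm, Complex.mul_conj', ← Complex.ofReal_pow, sq,
        Complex.ofReal_mul, mul_div_assoc, div_self (by exact_mod_cast hw'.ne'), mul_one]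
    simpa [hzw] using h _ hz

section Separation

variable {ι : Type*} [Fintype ι]

theorem exists_re_sum_mul_le_one_lt_of_notMem {B : Set (ι → ℂ)} (hconv : Convex ℝ B)
    (hclosed : IsClosed B) (h0 : 0 ∈ B) {f : ι → ℂ} (hf : f ∉ B) :
    ∃ ψ : ι → ℂ, (∀ v ∈ B, (∑ x, v x * ψ x).re ≤ 1) ∧ 1 < (∑ x, f x * ψ x).re := by
  classical
  obtain ⟨L, c, hB, hLf⟩ := RCLike.geometric_hahn_banach_closed_point (𝕜 := ℂ) hconv hclosed hf
  have hc : 0 < c := by simpa using hB 0 h0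
  have hL : ∀ v, L v = ∑ x, v x * L (fun y => if x = y then 1 else 0) := fun v => by
    simpa using L.toLinearMap.pi_apply_eq_sum_univ v
  refine ⟨fun x => (c⁻¹ : ℂ) * L (fun y => if x = y then 1 else 0), fun v hv => ?_, ?_⟩
  all_goals simp_rw [mul_left_comm _ (c⁻¹ : ℂ), ← mul_sum, ← hL, ← Complex.ofReal_inv,
    Complex.re_ofReal_mul]
  · exact (inv_mul_le_one₀ hc).2 (hB v hv).le
  · exact (one_lt_inv_mul₀ hc).2 hLf

end Separation

def OneBounded {α β : Type*} (F : α → β → ℂ) : Prop := ∀ a b, ‖F a b‖ ≤ 1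

theorem norm_cconj (k : ℕ) (z : ℂ) : ‖cconj k z‖ = ‖z‖ := by
  unfold cconj; split_ifs <;> simp

section DualFunction

variable {N : ℕ} [NeZero N] {s : ℕ}

theorem norm_dualUs_le_one {F : (Fin s → Bool) → ZMod N → ℂ} (hF : OneBounded F) (x : ZMod N) :
    ‖dualUs s F x‖ ≤ 1 := by
  have hN : (0 : ℝ) < (N : ℝ) ^ s := pow_pos (by exact_mod_cast NeZero.pos N) s
  rw [dualUs, norm_div, norm_pow, Complex.norm_natCast, div_le_one hN]
  calc _ ≤ ∑ _h : Fin s → ZMod N, (1 : ℝ) := by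
        refine (norm_sum_le _ _).trans (sum_le_sum fun h _ => ?_)
        rw [norm_prod]
        exact prod_le_one (fun _ _ => norm_nonneg _) fun ω _ => hF _ _
    _ = (N : ℝ) ^ s := by simp

theorem conj_dualUs (F : (Fin s → Bool) → ZMod N → ℂ) (x : ZMod N) :
    starRingEnd ℂ (dualUs s F x) = dualUs s (fun ω y => starRingEnd ℂ (F ω y)) x := by
  simp [dualUs, map_prod]

theorem dualUs_smul (c : ℂ) (F : (Fin s → Bool) → ZMod N → ℂ) (x : ZMod N) :
    dualUs s (c • F) x = c ^ (2 ^ s - 1) * dualUs s F x := by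
  have hcard : #(univ.filter fun ω : Fin s → Bool => ω ≠ fun _ => false) = 2 ^ s - 1 := by
    rw [filter_ne', card_erase_of_mem (mem_univ _)]
    simp
  simp only [dualUs, Pi.smul_apply, smul_eq_mul, prod_mul_distrib, prod_const, hcard, ← mul_sum,
    mul_div_assoc]

/-- Splitting off the vertex `ω = 0` of the cube exhibits the Gowers inner product as a pairing of
`g` with a dual function. -/
theorem sum_prod_cconj_eq (g : ZMod N → ℂ) :
    ∑ x : ZMod N, ∑ h : Fin s → ZMod N, ∏ ω : Fin s → Bool,
        cconj (wt ω) (g (x + ∑ i, if ω i then h i else 0)) =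
      (N : ℂ) ^ s * ∑ x, g x * dualUs s (fun ω y => cconj (wt ω) (g y)) x := by
  have hN : (N : ℂ) ^ s ≠ 0 := pow_ne_zero _ (NeZero.ne _)
  rw [mul_sum]
  refine sum_congr rfl fun x _ => ?_
  rw [dualUs, filter_ne', mul_left_comm, mul_div_cancel₀ _ hN, mul_sum]
  refine sum_congr rfl fun h _ => ?_
  rw [← mul_prod_erase univ _ (mem_univ fun _ => false)]
  simp [wt, cconj]

theorem gowers_le_of_norm_le {g : ZMod N → ℂ} {e : ℝ} (he : 0 ≤ e)
    (h : ‖(∑ x : ZMod N, ∑ h : Fin s → ZMod N, ∏ ω : Fin s → Bool,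
        cconj (wt ω) (g (x + ∑ i, if ω i then h i else 0))) / (N : ℂ) ^ (s + 1)‖ ≤ e ^ 2 ^ s) :
    gowers s g ≤ e := by
  calc gowers s g ≤ (e ^ 2 ^ s) ^ ((2 : ℝ) ^ s)⁻¹ :=
        Real.rpow_le_rpow (norm_nonneg _) h (by positivity)
    _ = e := by exact_mod_cast Real.pow_rpow_inv_natCast he (pow_ne_zero s two_ne_zero)

end DualFunction

theorem convex_setOf_norm_le {E F : Type*} [AddCommGroup E] [Module ℝ E]
    [SeminormedAddCommGroup F] [NormedSpace ℝ F] {ℓ : E → F} (hℓ : IsLinearMap ℝ ℓ) (c : ℝ) :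
    Convex ℝ {u | ‖ℓ u‖ ≤ c} := by
  simpa [Set.preimage] using (convex_closedBall (0 : F) c).is_linear_preimage hℓ

section Norms

variable {N : ℕ} [NeZero N]

theorem L1norm_add_le (u v : ZMod N → ℂ) : L1norm (u + v) ≤ L1norm u + L1norm v := by
  simp only [L1norm, ← add_div, ← sum_add_distrib]
  gcongr with x
  exact norm_add_le _ _

theorem L1norm_smul {𝕜 : Type*} [NormedField 𝕜] [NormedSpace 𝕜 ℂ] (c : 𝕜) (u : ZMod N → ℂ) :
    L1norm (c • u) = ‖c‖ * L1norm u := by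
  simp only [L1norm, Pi.smul_apply, norm_smul, ← mul_sum, mul_div_assoc]

theorem convexOn_L1norm : ConvexOn ℝ Set.univ (L1norm : (ZMod N → ℂ) → ℝ) :=
  ⟨convex_univ, fun u _ v _ a b ha hb _ => by
    simpa [L1norm_smul, abs_of_nonneg ha, abs_of_nonneg hb] using L1norm_add_le (a • u) (b • v)⟩

theorem continuous_L1norm : Continuous (L1norm : (ZMod N → ℂ) → ℝ) := by
  unfold L1norm; fun_prop

theorem norm_le_mul_L1norm (u : ZMod N → ℂ) : ‖u‖ ≤ N * L1norm u := by
  rw [L1norm, mul_div_cancel₀ _ (by exact_mod_cast NeZero.ne N), pi_norm_le_iff_of_nonempty]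
  exact fun x => single_le_sum (fun y _ => norm_nonneg (u y)) (mem_univ x)

theorem L1norm_le_norm (u : ZMod N → ℂ) : L1norm u ≤ ‖u‖ := by
  rw [L1norm, div_le_iff₀ (by exact_mod_cast NeZero.pos N)]
  calc ∑ x, ‖u x‖ ≤ ∑ _x : ZMod N, ‖u‖ := sum_le_sum fun x _ => norm_le_pi_norm u x
    _ = ‖u‖ * N := by simp [mul_comm]

theorem L2norm_le_one_iff {f : ZMod N → ℂ} : L2norm f ≤ 1 ↔ ∑ x, ‖f x‖ ^ 2 ≤ N := by
  rw [L2norm, Real.sqrt_le_one, div_le_one (by exact_mod_cast NeZero.pos N)]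

end Norms

section Decomposition

variable {N : ℕ} [NeZero N] (s : ℕ)

def dualAtoms (R : ℝ) : Set (ZMod N → ℂ) :=
  {g | ∃ (z : ℂ) (F : (Fin s → Bool) → ZMod N → ℂ), ‖z‖ ≤ R ∧ OneBounded F ∧ g = z • dualUs s F}

def l1Ball (β : ℝ) : Set (ZMod N → ℂ) := {u | L1norm u ≤ β}

def dualUniform (M δ : ℝ) : Set (ZMod N → ℂ) :=
  {u | (∀ x, ‖u x‖ ≤ M) ∧
    ∀ F : (Fin s → Bool) → ZMod N → ℂ, OneBounded F → ‖∑ x, u x * dualUs s F x‖ ≤ N * δ}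

variable {s}

theorem gowers_le_of_mem_dualUniform {u : ZMod N → ℂ} {M δ e : ℝ} (hu : u ∈ dualUniform s M δ)
    (hM : 0 < M) (he : 0 ≤ e) (hδ : M ^ (2 ^ s - 1) * δ ≤ e ^ 2 ^ s) : gowers s u ≤ e := by
  have hN : (0 : ℝ) < N := by exact_mod_cast NeZero.pos N
  set F : (Fin s → Bool) → ZMod N → ℂ := (M⁻¹ : ℂ) • fun ω y => cconj (wt ω) (u y)
  have hF : OneBounded F := fun ω y => by
    simpa [F, norm_cconj, abs_of_pos hM, inv_mul_le_one₀ hM] using hu.1 y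
  have hcconj : (fun ω y => cconj (wt ω) (u y)) = (M : ℂ) • F := by
    simp [F, smul_smul, mul_inv_cancel₀ (Complex.ofReal_ne_zero.2 hM.ne')]
  apply gowers_le_of_norm_le he
  rw [sum_prod_cconj_eq, hcconj]
  simp_rw [dualUs_smul, mul_left_comm (u _), ← mul_sum]
  rw [norm_div, norm_mul, norm_mul, norm_pow, norm_pow, norm_pow, Complex.norm_natCast,
    Complex.norm_real, Real.norm_of_nonneg hM.le, pow_succ, div_le_iff₀ (by positivity)]
  calc (N : ℝ) ^ s * (M ^ (2 ^ s - 1) * ‖∑ x, u x * dualUs s F x‖)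
      ≤ N ^ s * (M ^ (2 ^ s - 1) * (N * δ)) := by gcongr; exact hu.2 F hF
    _ = (M ^ (2 ^ s - 1) * δ) * (N ^ s * N) := by ring
    _ ≤ e ^ 2 ^ s * (N ^ s * N) := by gcongr

theorem isCompact_closure_convexHull_dualAtoms (R : ℝ) :
    IsCompact (closure (convexHull ℝ (dualAtoms s R : Set (ZMod N → ℂ)))) := by
  refine (isBounded_convexHull.2 <| (Metric.isBounded_closedBall (x := 0) (r := R)).subset ?_)
    |>.isCompact_closure
  rintro _ ⟨z, F, hz, hF, rfl⟩
  rw [mem_closedBall_zero_iff, norm_smul]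
  have hD : ‖dualUs s F‖ ≤ 1 := (pi_norm_le_iff_of_nonempty _).2 (norm_dualUs_le_one hF)
  simpa using mul_le_mul hz hD (norm_nonneg _) ((norm_nonneg z).trans hz)

theorem isCompact_l1Ball (β : ℝ) : IsCompact (l1Ball β : Set (ZMod N → ℂ)) := by
  refine Metric.isCompact_of_isClosed_isBounded (isClosed_le continuous_L1norm continuous_const)
    (isBounded_iff_forall_norm_le.2 ⟨N * β, fun u hu => ?_⟩)
  exact (norm_le_mul_L1norm u).trans (by gcongr; exact hu)

theorem convex_l1Ball (β : ℝ) : Convex ℝ (l1Ball β : Set (ZMod N → ℂ)) := by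
  simpa [l1Ball] using convexOn_L1norm.convex_le β

theorem isCompact_dualUniform (M δ : ℝ) : IsCompact (dualUniform s M δ : Set (ZMod N → ℂ)) := by
  refine Metric.isCompact_of_isClosed_isBounded ?_
    (isBounded_iff_forall_norm_le.2 ⟨M, fun u hu => (pi_norm_le_iff_of_nonempty _).2 hu.1⟩)
  simp only [dualUniform, Set.ofPred_and, Set.ofPred_forall]
  exact (isClosed_iInter fun x => isClosed_le (by fun_prop) continuous_const).inter
    (isClosed_iInter fun F => isClosed_iInter fun _ => isClosed_le (by fun_prop) continuous_const)

theorem convex_dualUniform (M δ : ℝ) : Convex ℝ (dualUniform s M δ : Set (ZMod N → ℂ)) := by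
  simp only [dualUniform, Set.ofPred_and, Set.ofPred_forall]
  refine (convex_iInter fun x => convex_setOf_norm_le (LinearMap.proj x).isLinear M).inter
    (convex_iInter fun F => convex_iInter fun _ => convex_setOf_norm_le ⟨?_, ?_⟩ _)
  · simp [add_mul, sum_add_distrib]
  · simp [mul_sum, mul_assoc]

variable {ψ : ZMod N → ℂ}

theorem norm_le_of_forall_l1Ball_re_sum_mul_le_one {β : ℝ} (hβ : 0 < β)
    (h : ∀ v ∈ l1Ball β, (∑ x, v x * ψ x).re ≤ 1) (x : ZMod N) : ‖ψ x‖ ≤ (N * β)⁻¹ := by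
  classical
  have hNβ : (0 : ℝ) < N * β := mul_pos (by exact_mod_cast NeZero.pos N) hβ
  refine Complex.norm_le_of_forall_re_mul_le fun z hz => ?_
  have hv : Pi.single x ((N * β : ℝ) * z) ∈ l1Ball β := by
    simp only [l1Ball, Set.mem_ofPred_eq, L1norm, Pi.single_apply, apply_ite norm, norm_zero,
      sum_ite_eq', mem_univ, if_true, norm_mul, Complex.norm_real, Real.norm_of_nonneg hNβ.le]
    rw [div_le_iff₀ (by exact_mod_cast NeZero.pos N)]
    nlinarith
  have := h _ hv
  simp only [Pi.single_apply, ite_mul, zero_mul, sum_ite_eq', mem_univ, if_true, mul_assoc,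
    Complex.re_ofReal_mul] at this
  rwa [← mul_one (N * β : ℝ)⁻¹, le_inv_mul_iff₀ hNβ, mul_assoc]

theorem norm_sum_dualUs_mul_le_of_forall_dualAtoms_re_le_one {R : ℝ} (hR : 0 < R)
    (h : ∀ g ∈ dualAtoms s R, (∑ x, g x * ψ x).re ≤ 1)
    {F : (Fin s → Bool) → ZMod N → ℂ} (hF : OneBounded F) :
    ‖∑ x, dualUs s F x * ψ x‖ ≤ R⁻¹ := by
  refine Complex.norm_le_of_forall_re_mul_le fun z hz => ?_
  have hg : ((R : ℂ) * z) • dualUs s F ∈ dualAtoms s R :=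
    ⟨_, F, by simpa [abs_of_pos hR] using mul_le_mul_of_nonneg_left hz hR.le, hF, rfl⟩
  have := h _ hg
  simp only [Pi.smul_apply, smul_eq_mul, mul_assoc, ← mul_sum, Complex.re_ofReal_mul] at this
  rwa [← mul_one R⁻¹, le_inv_mul_iff₀ hR]

theorem natCast_mul_conj_mem_dualUniform {β R M δ : ℝ} (hψ : ∀ x, ‖ψ x‖ ≤ (N * β)⁻¹)
    (hψD : ∀ F : (Fin s → Bool) → ZMod N → ℂ, OneBounded F → ‖∑ x, dualUs s F x * ψ x‖ ≤ R⁻¹)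
    (hM : β⁻¹ ≤ M) (hδ : R⁻¹ ≤ δ) :
    (fun x => (N : ℂ) * starRingEnd ℂ (ψ x)) ∈ dualUniform s M δ := by
  have hN : (0 : ℝ) < N := by exact_mod_cast NeZero.pos N
  refine ⟨fun x => ?_, fun F hF => ?_⟩
  · calc ‖(N : ℂ) * starRingEnd ℂ (ψ x)‖ = N * ‖ψ x‖ := by simp
      _ ≤ N * (N * β)⁻¹ := by gcongr; exact hψ x
      _ = β⁻¹ := by field_simp
      _ ≤ M := hM
  · have hconj : OneBounded fun ω y => starRingEnd ℂ (F ω y) := fun ω y => by simpa using hF ω y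
    have hsum : ∑ x, (N : ℂ) * starRingEnd ℂ (ψ x) * dualUs s F x =
        N * starRingEnd ℂ (∑ x, dualUs s (fun ω y => starRingEnd ℂ (F ω y)) x * ψ x) := by
      simp [mul_sum, ← conj_dualUs, mul_comm, mul_left_comm]
    rw [hsum, norm_mul, Complex.norm_natCast, Complex.norm_conj]
    gcongr
    exact (hψD _ hconj).trans hδ

theorem re_sum_natCast_mul_conj_mul (ψ : ZMod N → ℂ) :
    (∑ x, (N : ℂ) * starRingEnd ℂ (ψ x) * ψ x).re = N * ∑ x, ‖ψ x‖ ^ 2 := by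
  simp_rw [mul_assoc, Complex.conj_mul', ← mul_sum, ← Complex.ofReal_pow, ← Complex.ofReal_sum]
  rw [← Complex.ofReal_natCast, ← Complex.ofReal_mul, Complex.ofReal_re]

theorem re_sum_mul_le_one_of_L2norm_le_one {f : ZMod N → ℂ} (hf : L2norm f ≤ 1)
    (hψ : N * ∑ x, ‖ψ x‖ ^ 2 ≤ 1) : (∑ x, f x * ψ x).re ≤ 1 := by
  have hCS : (∑ x, ‖f x‖ * ‖ψ x‖) ^ 2 ≤ 1 :=
    (sum_mul_sq_le_sq_mul_sq _ _ _).trans <| (mul_le_mul_of_nonneg_right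
      (L2norm_le_one_iff.1 hf) (sum_nonneg fun _ _ => sq_nonneg _)).trans hψ
  calc (∑ x, f x * ψ x).re ≤ ‖∑ x, f x * ψ x‖ := Complex.re_le_norm _
    _ ≤ ∑ x, ‖f x‖ * ‖ψ x‖ := (norm_sum_le _ _).trans_eq (by simp_rw [norm_mul])
    _ ≤ 1 := (pow_le_one_iff_of_nonneg (sum_nonneg fun _ _ => by positivity) two_ne_zero).1 hCS

theorem exists_dualUs_combination_of_mem_convexHull {R : ℝ} {g : ZMod N → ℂ}
    (hg : g ∈ convexHull ℝ (dualAtoms s R)) :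
    ∃ (J : ℕ) (a : Fin J → ℂ) (Fam : Fin J → (Fin s → Bool) → ZMod N → ℂ),
      (∀ j, OneBounded (Fam j)) ∧ ∑ j, ‖a j‖ ≤ R ∧ g = fun x => ∑ j, a j * dualUs s (Fam j) x := by
  obtain ⟨ι, _, w, v, hw₀, hw₁, hv, rfl⟩ := mem_convexHull_iff_exists_fintype.1 hg
  choose ζ F hζ hF hvζ using hv
  let e := (Fintype.equivFin ι).symm
  refine ⟨Fintype.card ι, fun j => w (e j) * ζ (e j), fun j => F (e j), fun j => hF _, ?_, ?_⟩
  · calc ∑ j, ‖(w (e j) : ℂ) * ζ (e j)‖ = ∑ i, w i * ‖ζ i‖ := by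
          rw [e.sum_comp fun i => ‖(w i : ℂ) * ζ i‖]
          simp [abs_of_nonneg (hw₀ _)]
      _ ≤ ∑ i, w i * R := sum_le_sum fun i _ => mul_le_mul_of_nonneg_left (hζ i) (hw₀ i)
      _ = R := by rw [← sum_mul, hw₁, one_mul]
  · ext x
    rw [e.sum_comp fun i => (w i : ℂ) * ζ i * dualUs s (F i) x]
    simp [hvζ, Complex.real_smul, mul_assoc]

theorem exists_dualUs_combination_of_mem_closure_convexHull {R η : ℝ} (hη : 0 < η)
    {g : ZMod N → ℂ} (hg : g ∈ closure (convexHull ℝ (dualAtoms s R))) :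
    ∃ (J : ℕ) (a : Fin J → ℂ) (Fam : Fin J → (Fin s → Bool) → ZMod N → ℂ),
      (∀ j, OneBounded (Fam j)) ∧ ∑ j, ‖a j‖ ≤ R ∧
        L1norm (g - fun x => ∑ j, a j * dualUs s (Fam j) x) ≤ η := by
  obtain ⟨g', hg', hgg'⟩ := Metric.mem_closure_iff.1 hg η hη
  obtain ⟨J, a, Fam, hFam, ha, rfl⟩ := exists_dualUs_combination_of_mem_convexHull hg'
  exact ⟨J, a, Fam, hFam, ha, (L1norm_le_norm _).trans (dist_eq_norm g _ ▸ hgg'.le)⟩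

theorem mem_closure_convexHull_add_l1Ball_add_dualUniform {f : ZMod N → ℂ} (hf : L2norm f ≤ 1)
    {R β M δ : ℝ} (hR : 0 < R) (hβ : 0 < β) (hM : β⁻¹ ≤ M) (hδ : R⁻¹ ≤ δ) :
    f ∈ closure (convexHull ℝ (dualAtoms s R)) + l1Ball β + dualUniform s M δ := by
  set K₁ : Set (ZMod N → ℂ) := closure (convexHull ℝ (dualAtoms s R))
  have h0₁ : (0 : ZMod N → ℂ) ∈ K₁ :=
    subset_closure <| subset_convexHull ℝ _ ⟨0, 0, by simpa using hR.le, fun _ _ => by simp,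
      by simp⟩
  have h0₂ : (0 : ZMod N → ℂ) ∈ l1Ball β := by simpa [l1Ball, L1norm] using hβ.le
  have h0₃ : (0 : ZMod N → ℂ) ∈ dualUniform s M δ :=
    ⟨fun _ => by simpa using (inv_pos.2 hβ).le.trans hM,
      fun _ _ => by simpa using mul_nonneg (Nat.cast_nonneg N) ((inv_pos.2 hR).le.trans hδ)⟩
  by_contra hfB
  obtain ⟨ψ, hψ, hfψ⟩ := exists_re_sum_mul_le_one_lt_of_notMem
    ((convex_convexHull ℝ _).closure.add (convex_l1Ball β) |>.add (convex_dualUniform M δ))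
    (((isCompact_closure_convexHull_dualAtoms R).add (isCompact_l1Ball β)).add
      (isCompact_dualUniform M δ)).isClosed
    (by simpa using Set.add_mem_add (Set.add_mem_add h0₁ h0₂) h0₃) hfB
  have hψ₁ : ∀ v ∈ K₁, (∑ x, v x * ψ x).re ≤ 1 := fun v hv => by
    simpa using hψ _ (Set.add_mem_add (Set.add_mem_add hv h0₂) h0₃)
  have hψ₂ : ∀ v ∈ l1Ball β, (∑ x, v x * ψ x).re ≤ 1 := fun v hv => by
    simpa using hψ _ (Set.add_mem_add (Set.add_mem_add h0₁ hv) h0₃)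
  have hψ₃ : ∀ v ∈ dualUniform s M δ, (∑ x, v x * ψ x).re ≤ 1 := fun v hv => by
    simpa using hψ _ (Set.add_mem_add (Set.add_mem_add h0₁ h0₂) hv)
  have hψ_inf := norm_le_of_forall_l1Ball_re_sum_mul_le_one hβ hψ₂
  have hψ_dual := fun F => norm_sum_dualUs_mul_le_of_forall_dualAtoms_re_le_one (F := F) hR
    fun g hg => hψ₁ g (subset_closure (subset_convexHull ℝ _ hg))
  have hψ_L2 := hψ₃ _ (natCast_mul_conj_mem_dualUniform hψ_inf hψ_dual hM hδ)
  rw [re_sum_natCast_mul_conj_mul] at hψ_L2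
  exact hfψ.not_ge (re_sum_mul_le_one_of_L2norm_le_one hf hψ_L2)

end Decomposition

theorem inv_pow_mul_inv_le_pow {ε₁ ε₄ η m : ℝ} {k : ℕ} (hk : 0 < k) (hε₁ : 0 < ε₁) (hη : 0 < η)
    (hm : η / 2 ≤ m) (hε : 2 * ε₁ ≤ ε₄) :
    m⁻¹ ^ (k - 1) * (η * ((ε₁ * η) ^ k)⁻¹)⁻¹ ≤ ε₄ ^ k := by
  obtain ⟨n, rfl⟩ := Nat.exists_eq_add_one_of_ne_zero hk.ne'
  have hm₀ : 0 < m := by linarith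
  rw [Nat.add_sub_cancel]
  calc m⁻¹ ^ n * (η * ((ε₁ * η) ^ (n + 1))⁻¹)⁻¹ = ε₁ * (ε₁ * (η / m)) ^ n := by
        field_simp; ring
    _ ≤ ε₁ * (ε₁ * 2) ^ n := by gcongr; rw [div_le_iff₀ hm₀]; linarith
    _ ≤ (2 * ε₁) ^ (n + 1) := by rw [pow_succ', mul_comm ε₁ 2]; gcongr; linarith
    _ ≤ ε₄ ^ (n + 1) := by gcongr

theorem stmt7_general (N : ℕ) [NeZero N] (s : ℕ)
    (f : ZMod N → ℂ) (hf : L2norm f ≤ 1)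
    (ε₁ ε₂ ε₃ ε₄ : ℝ) (hε₁ : 0 < ε₁) (hε₂ : 0 < ε₂) (hε₃ : 0 < ε₃) (hε₄ : 0 < ε₄)
    (hsum : ε₂⁻¹ * ε₃ + ε₄⁻¹ * ε₁ ≤ 1 / 2) (η : ℝ) (hη : 0 < η) :
    ∃ (J : ℕ) (a : Fin J → ℂ) (Fam : Fin J → (Fin s → Bool) → ZMod N → ℂ)
      (f₂ f₃ : ZMod N → ℂ),
      (∀ j ω x, Norm.norm (Fam j ω x) ≤ 1) ∧
      f = (fun x => ∑ j, a j * dualUs s (Fam j) x) + f₂ + f₃ ∧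
      (∑ j, Norm.norm (a j)) ≤ η * ((ε₁ * η) ^ (2 ^ s))⁻¹ ∧
      L1norm f₂ ≤ ε₂ + η ∧
      Linfnorm f₃ ≤ ε₃⁻¹ ∧
      gowers s f₃ ≤ ε₄ := by
  have hε₃₂ : ε₃ ≤ ε₂ := by
    have : ε₂⁻¹ * ε₃ ≤ 1 := by linarith [mul_pos (inv_pos.2 hε₄) hε₁]
    rwa [inv_mul_le_iff₀ hε₂, mul_one] at this
  have hε₁₄ : 2 * ε₁ ≤ ε₄ := by
    have : ε₄⁻¹ * ε₁ ≤ 1 / 2 := by linarith [mul_pos (inv_pos.2 hε₂) hε₃]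
    rw [inv_mul_le_iff₀ hε₄] at this
    linarith
  set R := η * ((ε₁ * η) ^ (2 ^ s))⁻¹
  -- `m ≥ η / 2` makes the `U^s` bound independent of `ε₃`; `m ≤ ε₂ + η / 2` is what `K₃` needs
  set m := max ε₃ (η / 2)
  have hm : 0 < m := hε₃.trans_le (le_max_left _ _)
  obtain ⟨_, ⟨u₁, hu₁, u₂, hu₂, rfl⟩, u₃, hu₃, rfl⟩ :=
    mem_closure_convexHull_add_l1Ball_add_dualUniform (s := s) (M := m⁻¹) (δ := R⁻¹) hf
      (by positivity) (by positivity : 0 < ε₂ + η / 2)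
      (inv_anti₀ hm (max_le (by linarith) (by linarith))) le_rfl
  obtain ⟨J, a, Fam, hFam, ha, hu₁'⟩ :=
    exists_dualUs_combination_of_mem_closure_convexHull (half_pos hη) hu₁
  refine ⟨J, a, Fam, u₂ + (u₁ - fun x => ∑ j, a j * dualUs s (Fam j) x), u₃,
    fun j => hFam j, by dsimp only; abel, ha, ?_, ?_, ?_⟩
  · linarith [L1norm_add_le u₂ (u₁ - fun x => ∑ j, a j * dualUs s (Fam j) x), hu₂.out]
  · exact ciSup_le fun x => (hu₃.1 x).trans (inv_anti₀ hε₃ (le_max_left _ _))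
  · exact gowers_le_of_mem_dualUniform hu₃ (inv_pos.2 hm) hε₄.le
      (inv_pow_mul_inv_le_pow (Nat.two_pow_pos s) hε₁ hη (le_max_right _ _) hε₁₄)

theorem stmt7 (N : ℕ) [NeZero N] (hN : Nat.Prime N) (s : ℕ) (hs : 1 ≤ s)
    (f : ZMod N → ℂ) (hf : L2norm f ≤ 1)
    (ε₁ ε₂ ε₃ ε₄ : ℝ) (hε₁ : 0 < ε₁) (hε₂ : 0 < ε₂) (hε₃ : 0 < ε₃) (hε₄ : 0 < ε₄)
    (hsum : ε₂⁻¹ * ε₃ + ε₄⁻¹ * ε₁ ≤ 1 / 2) (η : ℝ) (hη : 0 < η) :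
    ∃ (J : ℕ) (a : Fin J → ℂ) (Fam : Fin J → (Fin s → Bool) → ZMod N → ℂ)
      (f₂ f₃ : ZMod N → ℂ),
      (∀ j ω x, Norm.norm (Fam j ω x) ≤ 1) ∧
      f = (fun x => ∑ j, a j * dualUs s (Fam j) x) + f₂ + f₃ ∧
      (∑ j, Norm.norm (a j)) ≤ η * ((ε₁ * η) ^ (2 ^ s))⁻¹ ∧
      L1norm f₂ ≤ ε₂ + η ∧
      Linfnorm f₃ ≤ ε₃⁻¹ ∧
      gowers s f₃ ≤ ε₄ :=
  stmt7_general N s f hf ε₁ ε₂ ε₃ ε₄ hε₁ hε₂ hε₃ hε₄ hsum η hη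

end
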